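/- arXiv:2601.06385 — 6 statements merged into one kernel-verified Lean document; each statement's English description precedes it below -/
import Mathlib

section
/- Let π : X × X → ℝ≥0 be a probability mass function on a finite set X ⊆ ℤ, ε > 0, and fix x' ∈ X with m = ∑_x π(x, x') > π(x', x'). Let n ≥ max_{x: π(x,x')>0} |x - x'| with n ≥ 1, and Φ = ln((exp(ε)·m - π(x',x'))/(m - π(x',x'))). Then f(n/Φ) = ∑_x (exp(|x-x'|·Φ/n) - exp(ε)) π(x, x') ≤ 0. -/
/-! The term at `x'` contributes `(1 - e^ε) π(x',x')`. Since `Φ ≥ 0` and every other `x` carrying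
mass has `|x - x'| ≤ n`, each remaining factor is at most `e^Φ - e^ε`, so the rest contributes at
most `(e^Φ - e^ε)(m - π(x',x'))`. Now `Φ` is defined precisely so that
`e^Φ (m - π(x',x')) = e^ε m - π(x',x')`, and the two contributions cancel. -/

open Finset

theorem Finset.sum_mul_le_add_mul_sum_erase {ι : Type*} [DecidableEq ι] {s : Finset ι} {i : ι}
    (hi : i ∈ s) {w g : ι → ℝ} {R : ℝ} (hw : ∀ j ∈ s, 0 ≤ w j)
    (hg : ∀ j ∈ s, j ≠ i → 0 < w j → g j ≤ R) :
    ∑ j ∈ s, g j * w j ≤ g i * w i + R * ∑ j ∈ s.erase i, w j := by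
  rw [← add_sum_erase s _ hi, mul_sum]
  gcongr _ + ∑ j ∈ _, ?_ with j hj
  obtain ⟨hji, hjs⟩ := mem_erase.mp hj
  rcases (hw j hjs).eq_or_lt with hzero | hpos
  · simp [← hzero]
  · exact mul_le_mul_of_nonneg_right (hg j hjs hji hpos) hpos.le

theorem Real.exp_mul_div_le_exp {d n Φ : ℝ} (hd : 0 ≤ d) (hdn : d ≤ n) (hΦ : 0 ≤ Φ) :
    exp (d * Φ / n) ≤ exp Φ :=
  exp_le_exp.mpr <| div_le_of_le_mul₀ (hd.trans hdn) hΦ <| by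
    rw [mul_comm Φ]
    exact mul_le_mul_of_nonneg_right hdn hΦ

theorem one_le_mul_sub_div_sub {c m b : ℝ} (hc : 1 ≤ c) (hb : 0 ≤ b) (hbm : b < m) :
    1 ≤ (c * m - b) / (m - b) := by
  rw [one_le_div (sub_pos.mpr hbm)]
  nlinarith

theorem upper_bracket_point_nonpositive_general
    (X : Finset ℤ) (π : ℤ × ℤ → ℝ) (hπ : ∀ p : ℤ × ℤ, 0 ≤ π p)
    (ε : ℝ) (hε : 0 < ε) (x' : ℤ) (hx' : x' ∈ X)
    (m : ℝ) (hm : m = ∑ x ∈ X, π (x, x')) (hmgt : π (x', x') < m)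
    (n : ℕ)
    (hmax : ∀ x ∈ X, 0 < π (x, x') → |x - x'| ≤ (n : ℤ))
    (Φ : ℝ) (hΦ : Φ = Real.log ((Real.exp ε * m - π (x', x')) / (m - π (x', x')))) :
    ∑ x ∈ X, (Real.exp ((|x - x'| : ℤ) * Φ / n) - Real.exp ε) * π (x, x') ≤ 0 := by
  have hratio := one_le_mul_sub_div_sub (Real.one_le_exp hε.le) (hπ (x', x')) hmgt
  have hΦ_nonneg : 0 ≤ Φ := hΦ ▸ Real.log_nonneg hratio
  have hexpΦ : Real.exp Φ = (Real.exp ε * m - π (x', x')) / (m - π (x', x')) := by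
    rw [hΦ, Real.exp_log (by linarith)]
  have hrest : ∑ x ∈ X.erase x', π (x, x') = m - π (x', x') := by
    rw [hm, sum_erase_eq_sub hx']
  calc ∑ x ∈ X, (Real.exp ((|x - x'| : ℤ) * Φ / n) - Real.exp ε) * π (x, x')
      ≤ (1 - Real.exp ε) * π (x', x') + (Real.exp Φ - Real.exp ε) * (m - π (x', x')) := by
        rw [← hrest]
        simpa using sum_mul_le_add_mul_sum_erase (g := fun x ↦
            Real.exp ((|x - x'| : ℤ) * Φ / n) - Real.exp ε) hx' (fun x _ ↦ hπ (x, x'))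
          fun x hx _ hpos ↦ sub_le_sub_right (Real.exp_mul_div_le_exp (by positivity)
            (by exact_mod_cast hmax x hx hpos) hΦ_nonneg) _
    _ = 0 := by
        rw [hexpΦ]
        field_simp [(sub_pos.mpr hmgt).ne']
        ring

theorem upper_bracket_point_nonpositive
    (X : Finset ℤ) (π : ℤ × ℤ → ℝ) (hπ : ∀ p : ℤ × ℤ, 0 ≤ π p)
    (hpmf : ∑ x ∈ X, ∑ y ∈ X, π (x, y) = 1)
    (ε : ℝ) (hε : 0 < ε) (x' : ℤ) (hx' : x' ∈ X)
    (m : ℝ) (hm : m = ∑ x ∈ X, π (x, x')) (hmgt : π (x', x') < m)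
    (n : ℕ) (hn : 1 ≤ n)
    (hmax : ∀ x ∈ X, 0 < π (x, x') → |x - x'| ≤ (n : ℤ))
    (Φ : ℝ) (hΦ : Φ = Real.log ((Real.exp ε * m - π (x', x')) / (m - π (x', x')))) :
    ∑ x ∈ X, (Real.exp ((|x - x'| : ℤ) * Φ / n) - Real.exp ε) * π (x, x') ≤ 0 :=
  upper_bracket_point_nonpositive_general X π hπ ε hε x' hx' m hm hmgt n hmax Φ hΦ
end

section
/- Let π : X × X → ℝ≥0 be nonnegative on a finite set X ⊆ ℤ, ε > 0, x' ∈ X with m = ∑_x π(x,x') > π(x',x'), and n = max_{x: π(x,x')>0} |x - x'| ≥ 1. Then there exists θ̂ ∈ [1/Φ, n/Φ], with Φ = ln((exp(ε)·m - π(x',x'))/(m - π(x',x'))), such that ∑_x (exp(|x-x'|/θ̂) - exp(ε)) π(x,x') = 0. -/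
theorem root_exists_in_bracket
    (X : Finset ℤ) (π : ℤ × ℤ → ℝ) (hπ : ∀ p : ℤ × ℤ, 0 ≤ π p)
    (ε : ℝ) (hε : 0 < ε) (x' : ℤ) (hx' : x' ∈ X)
    (m : ℝ) (hm : m = ∑ x ∈ X, π (x, x')) (hmgt : π (x', x') < m)
    (n : ℕ) (hn : 1 ≤ n)
    (hmax : ∀ x ∈ X, 0 < π (x, x') → |x - x'| ≤ (n : ℤ))
    (hwit : ∃ x₀ ∈ X, 0 < π (x₀, x') ∧ |x₀ - x'| = (n : ℤ))
    (Φ : ℝ) (hΦ : Φ = Real.log ((Real.exp ε * m - π (x', x')) / (m - π (x', x')))) :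
    ∃ θ ∈ Set.Icc (1 / Φ) ((n : ℝ) / Φ),
      ∑ x ∈ X, (Real.exp ((|x - x'| : ℤ) / θ) - Real.exp ε) * π (x, x') = 0 := by
  set p := π (x', x') with hp
  have hp0 : 0 ≤ p := hπ _
  have hmp : 0 < m - p := by linarith
  have hm0 : 0 < m := by linarith
  have he1 : 1 < Real.exp ε := by
    rw [← Real.exp_zero]; exact Real.exp_lt_exp.mpr hε
  have hR1 : 1 < (Real.exp ε * m - p) / (m - p) := by
    rw [lt_div_iff₀ hmp]; nlinarith
  have hΦ0 : 0 < Φ := by rw [hΦ]; exact Real.log_pos hR1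
  have hexpΦ : Real.exp Φ = (Real.exp ε * m - p) / (m - p) := by
    rw [hΦ, Real.exp_log (by linarith)]
  have hn1 : (1:ℝ) ≤ (n:ℝ) := by exact_mod_cast hn
  set f : ℝ → ℝ := fun θ => ∑ x ∈ X, (Real.exp ((|x - x'| : ℤ) / θ) - Real.exp ε) * π (x, x') with hf
  have hθ1pos : 0 < 1 / Φ := by positivity
  have hθle : 1 / Φ ≤ (n:ℝ) / Φ := by gcongr
  -- erase sum
  have herase : ∑ x ∈ X.erase x', π (x, x') = m - p := by
    have := Finset.add_sum_erase X (fun x => π (x, x')) hx'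
    rw [hm]; linarith [this]
  have hsplit : ∀ θ : ℝ, f θ =
      ((Real.exp ((|x' - x'| : ℤ) / θ) - Real.exp ε) * p
        + ∑ x ∈ X.erase x', (Real.exp ((|x - x'| : ℤ) / θ) - Real.exp ε) * π (x, x')) := by
    intro θ
    rw [hf]
    exact (Finset.add_sum_erase X _ hx').symm
  have hzero : ∀ θ : ℝ, Real.exp ((|x' - x'| : ℤ) / θ) = 1 := by
    intro θ; simp
  -- key algebraic fact
  have hkey : Real.exp Φ * (m - p) = Real.exp ε * m - p := by
    rw [hexpΦ, div_mul_cancel₀]; exact ne_of_gt hmp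
  -- lower bound at θ₁ = 1/Φ
  have hlower : 0 ≤ f (1 / Φ) := by
    have hsum : Real.exp Φ * (m - p) ≤
        ∑ x ∈ X.erase x', Real.exp ((|x - x'| : ℤ) / (1 / Φ)) * π (x, x') := by
      rw [← herase, Finset.mul_sum]
      apply Finset.sum_le_sum
      intro x hx
      have hxne : x ≠ x' := Finset.ne_of_mem_erase hx
      have hd1 : (1:ℝ) ≤ ((|x - x'| : ℤ) : ℝ) := by
        have : (1:ℤ) ≤ |x - x'| := Int.one_le_abs (sub_ne_zero_of_ne hxne)
        exact_mod_cast this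
      have : Φ ≤ ((|x - x'| : ℤ) : ℝ) / (1 / Φ) := by
        rw [div_div_eq_mul_div, div_one]
        nlinarith
      exact mul_le_mul_of_nonneg_right (Real.exp_le_exp.mpr this) (hπ _)
    have := hsplit (1 / Φ)
    rw [hzero] at this
    have hexpand : ∑ x ∈ X.erase x', (Real.exp ((|x - x'| : ℤ) / (1 / Φ)) - Real.exp ε) * π (x, x')
        = (∑ x ∈ X.erase x', Real.exp ((|x - x'| : ℤ) / (1 / Φ)) * π (x, x'))
          - Real.exp ε * (m - p) := by
      rw [← herase, Finset.mul_sum, ← Finset.sum_sub_distrib]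
      congr 1; ext x; ring
    rw [this, hexpand]
    nlinarith
  -- upper bound at θ₂ = n/Φ
  have hupper : f ((n:ℝ) / Φ) ≤ 0 := by
    have hsum : ∑ x ∈ X.erase x', Real.exp ((|x - x'| : ℤ) / ((n:ℝ) / Φ)) * π (x, x')
        ≤ Real.exp Φ * (m - p) := by
      rw [← herase, Finset.mul_sum]
      apply Finset.sum_le_sum
      intro x hx
      rcases eq_or_lt_of_le (hπ (x, x')) with h | h
      · rw [← h, mul_zero, mul_zero]
      · have hdn : ((|x - x'| : ℤ) : ℝ) ≤ (n:ℝ) := by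
          exact_mod_cast hmax x (Finset.mem_of_mem_erase hx) h
        have hnΦpos : 0 < (n:ℝ) / Φ := by positivity
        have : ((|x - x'| : ℤ) : ℝ) / ((n:ℝ) / Φ) ≤ Φ := by
          rw [div_le_iff₀ hnΦpos, mul_comm, div_mul_cancel₀ _ (ne_of_gt hΦ0)]
          exact hdn
        exact mul_le_mul_of_nonneg_right (Real.exp_le_exp.mpr this) (hπ _)
    have := hsplit ((n:ℝ) / Φ)
    rw [hzero] at this
    have hexpand : ∑ x ∈ X.erase x', (Real.exp ((|x - x'| : ℤ) / ((n:ℝ) / Φ)) - Real.exp ε) * π (x, x')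
        = (∑ x ∈ X.erase x', Real.exp ((|x - x'| : ℤ) / ((n:ℝ) / Φ)) * π (x, x'))
          - Real.exp ε * (m - p) := by
      rw [← herase, Finset.mul_sum, ← Finset.sum_sub_distrib]
      congr 1; ext x; ring
    rw [this, hexpand]
    nlinarith
  -- continuity
  have hcont : ContinuousOn f (Set.Icc (1 / Φ) ((n:ℝ) / Φ)) := by
    apply continuousOn_finset_sum
    intro x _
    apply ContinuousOn.mul _ continuousOn_const
    apply ContinuousOn.sub _ continuousOn_const
    apply Real.continuous_exp.comp_continuousOn
    apply ContinuousOn.div continuousOn_const continuousOn_id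
    intro θ hθ
    exact ne_of_gt (lt_of_lt_of_le hθ1pos hθ.1)
  have hsub := intermediate_value_Icc' hθle hcont
  obtain ⟨θ, hθmem, hθeq⟩ := hsub ⟨hupper, hlower⟩
  exact ⟨θ, hθmem, hθeq⟩
end

section
/- Let π : X × X → ℝ≥0 be a probability mass function on a finite set X ⊆ ℤ with support containing at least one diagonal pair (x = x') of positive mass and at least one off-diagonal pair of positive mass, ε > 0, and n = max_{(x,x') ∈ supp(π)} |x - x'| ≥ 1. Fix x' and define θ₁ = n/ε and let θ̂ > 0 be any root of f(θ) = ∑_x (exp(|x-x'|/θ) - exp(ε)) π(x, x') = 0, assuming π(x₀,x') > 0 for some x₀ with |x₀ - x'| = n and π(x',x') > 0. Then θ̂ < θ₁, i.e., the noise reduction Δ = θ₁ - θ̂ is strictly positive. -/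
theorem strict_noise_reduction
    (X : Finset ℤ) (π : ℤ × ℤ → ℝ) (hπ : ∀ p : ℤ × ℤ, 0 ≤ π p)
    (hpmf : ∑ x ∈ X, ∑ y ∈ X, π (x, y) = 1)
    (ε : ℝ) (hε : 0 < ε)
    (n : ℕ) (hn : 1 ≤ n)
    (hmax : ∀ x ∈ X, ∀ y ∈ X, 0 < π (x, y) → |x - y| ≤ (n : ℤ))
    (x' : ℤ) (hx' : x' ∈ X)
    (x₀ : ℤ) (hx₀ : x₀ ∈ X) (hx₀dist : |x₀ - x'| = (n : ℤ)) (hx₀pos : 0 < π (x₀, x'))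
    (hdiag : 0 < π (x', x'))
    (θ₁ : ℝ) (hθ₁ : θ₁ = (n : ℝ) / ε)
    (θhat : ℝ) (hθhat : 0 < θhat)
    (hroot : ∑ x ∈ X, (Real.exp ((|x - x'| : ℤ) / θhat) - Real.exp ε) * π (x, x') = 0) :
    θhat < θ₁ := by
  by_contra h
  push_neg at h
  rw [hθ₁] at h
  -- h : n / ε ≤ θhat
  have hle : (n : ℝ) / θhat ≤ ε := by
    rw [div_le_iff₀ hθhat]
    rw [div_le_iff₀ hε] at h
    linarith [mul_comm ε θhat]
  have hsum : ∑ x ∈ X, (Real.exp ((|x - x'| : ℤ) / θhat) - Real.exp ε) * π (x, x') < 0 := by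
    have h0 : (0 : ℝ) = ∑ x ∈ X, (0 : ℝ) := by simp
    rw [h0]
    apply Finset.sum_lt_sum
    · intro i hi
      rcases lt_or_eq_of_le (hπ (i, x')) with hp | hp
      · have hd := hmax i hi x' hx' hp
        have : ((|i - x'| : ℤ) : ℝ) / θhat ≤ ε := by
          refine le_trans ?_ hle
          apply div_le_div_of_nonneg_right ?_ hθhat.le
          exact_mod_cast hd
        have hexp : Real.exp ((|i - x'| : ℤ) / θhat) ≤ Real.exp ε := Real.exp_le_exp.2 this
        nlinarith
      · simp [← hp]
    · refine ⟨x', hx', ?_⟩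
      have : Real.exp ((|x' - x'| : ℤ) / θhat) < Real.exp ε := by
        simp only [sub_self, abs_zero, Int.cast_zero, zero_div, Real.exp_zero]
        exact Real.one_lt_exp_iff.mpr hε
      nlinarith
  linarith
end

section
/- Let p, q : {0,1,...,n} → ℝ≥0 be probability mass functions with n ≥ 1 satisfying p(0) > 1 − q(n). Then the Kantorovich coupling π* defined via F(x, x') = min(∑_{k=0}^{x} p(k), ∑_{k=0}^{x'} q(k)) satisfies: π*(0, x') = q(x') for all x' < n; π*(x, n) = p(x) for all x > 0; π*(0, n) = p(0) + q(n) − 1; and π*(x, x') = 0 for all other pairs with x > 0 and x' < n. -/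
theorem worst_case_transport_plan_closed_form
    (n : ℤ) (hn : 1 ≤ n) (p q : ℤ → ℝ)
    (hp : ∀ k ∈ Finset.Icc 0 n, 0 ≤ p k) (hp1 : ∑ k ∈ Finset.Icc 0 n, p k = 1)
    (hq : ∀ k ∈ Finset.Icc 0 n, 0 ≤ q k) (hq1 : ∑ k ∈ Finset.Icc 0 n, q k = 1)
    (hcond : 1 - q n < p 0)
    (F : ℤ → ℤ → ℝ)
    (hF : F = fun x x' => min (∑ k ∈ Finset.Icc 0 x, p k) (∑ k ∈ Finset.Icc 0 x', q k))
    (πs : ℤ → ℤ → ℝ)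
    (hπs : πs = fun x x' => F x x' - F (x - 1) x' - F x (x' - 1) + F (x - 1) (x' - 1)) :
    (∀ x' : ℤ, 0 ≤ x' → x' < n → πs 0 x' = q x') ∧
    (∀ x : ℤ, 0 < x → x ≤ n → πs x n = p x) ∧
    πs 0 n = p 0 + q n - 1 ∧
    (∀ x x' : ℤ, 0 < x → x ≤ n → 0 ≤ x' → x' < n → πs x x' = 0) := by
  subst hF hπs
  -- splitting lemma
  have split : ∀ (f : ℤ → ℝ) (x : ℤ), 0 ≤ x →
      ∑ k ∈ Finset.Icc 0 x, f k = (∑ k ∈ Finset.Icc 0 (x-1), f k) + f x := by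
    intro f x hx
    have h1 : Finset.Icc (0:ℤ) x = insert x (Finset.Icc 0 (x-1)) := by
      ext k; simp only [Finset.mem_Icc, Finset.mem_insert]; omega
    have h2 : x ∉ Finset.Icc (0:ℤ) (x-1) := by simp
    rw [h1, Finset.sum_insert h2]; exact add_comm _ _
  -- monotonicity lemma
  have mono : ∀ (f : ℤ → ℝ), (∀ k ∈ Finset.Icc 0 n, 0 ≤ f k) → ∀ a b : ℤ, a ≤ b → b ≤ n →
      ∑ k ∈ Finset.Icc 0 a, f k ≤ ∑ k ∈ Finset.Icc 0 b, f k := by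
    intro f hf a b hab hbn
    apply Finset.sum_le_sum_of_subset_of_nonneg
    · exact Finset.Icc_subset_Icc_right hab
    · intro k hk _; exact hf k (Finset.mem_Icc.mpr ⟨(Finset.mem_Icc.mp hk).1, le_trans (Finset.mem_Icc.mp hk).2 hbn⟩)
  set P : ℤ → ℝ := fun x => ∑ k ∈ Finset.Icc 0 x, p k with hP
  set Q : ℤ → ℝ := fun x => ∑ k ∈ Finset.Icc 0 x, q k with hQ
  have hPneg : P (-1) = 0 := by simp [hP]
  have hQneg : Q (-1) = 0 := by simp [hQ]
  have hP0 : P 0 = p 0 := by simp [hP]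
  have hPn : P n = 1 := hp1
  have hQn : Q n = 1 := hq1
  have hQn1 : Q (n-1) = 1 - q n := by
    have := split q n (by omega)
    simp only [hQ]
    linarith
  -- P x ≥ p 0 for x ≥ 0
  have hPge : ∀ x : ℤ, 0 ≤ x → x ≤ n → p 0 ≤ P x := by
    intro x hx hxn; rw [← hP0]; exact mono p hp 0 x hx hxn
  have hPle1 : ∀ x : ℤ, x ≤ n → P x ≤ 1 := by
    intro x hxn; rw [← hPn]; exact mono p hp x n hxn le_rfl
  have hQle : ∀ x : ℤ, x ≤ n - 1 → Q x ≤ 1 - q n := by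
    intro x hx
    rcases le_or_gt 0 x with h | h
    · rw [← hQn1]; exact mono q hq x (n-1) hx (by omega)
    · have : Q x = 0 := by
        simp only [hQ]
        rw [Finset.Icc_eq_empty (by omega), Finset.sum_empty]
      rw [this, ← hQn1, ← hQneg]
      exact mono q hq (-1) (n-1) (by omega) (by omega)
  have hQnonneg : ∀ x : ℤ, x ≤ n → 0 ≤ Q x := by
    intro x hxn
    rcases le_or_gt 0 x with h | h
    · exact Finset.sum_nonneg fun k hk => hq k (Finset.mem_Icc.mpr
        ⟨(Finset.mem_Icc.mp hk).1, le_trans (Finset.mem_Icc.mp hk).2 hxn⟩)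
    · have : Q x = 0 := by
        simp only [hQ]
        rw [Finset.Icc_eq_empty (by omega), Finset.sum_empty]
      rw [this]
  refine ⟨?_, ?_, ?_, ?_⟩
  · -- πs 0 x' = q x'
    intro x' hx' hx'n
    simp only
    have e1 : min (P 0) (Q x') = Q x' :=
      min_eq_right (le_trans (hQle x' (by omega)) (le_trans (le_of_lt hcond) (le_of_eq hP0.symm)))
    have e2 : min (P (0-1)) (Q x') = P (0-1) := by
      rw [show (0:ℤ)-1 = -1 by norm_num, hPneg]; exact min_eq_left (hQnonneg x' (by omega))
    have e3 : min (P 0) (Q (x'-1)) = Q (x'-1) :=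
      min_eq_right (le_trans (hQle (x'-1) (by omega)) (le_trans (le_of_lt hcond) (le_of_eq hP0.symm)))
    have e4 : min (P (0-1)) (Q (x'-1)) = P (0-1) := by
      rw [show (0:ℤ)-1 = -1 by norm_num, hPneg]; exact min_eq_left (hQnonneg (x'-1) (by omega))
    rw [e1, e2, e3, e4]
    rw [show (0:ℤ)-1 = -1 by norm_num, hPneg]
    have := split q x' hx'
    simp only [hQ] at *
    linarith
  · -- πs x n = p x
    intro x hx hxn
    simp only
    have e1 : min (P x) (Q n) = P x := min_eq_left (by rw [hQn]; exact hPle1 x hxn)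
    have e2 : min (P (x-1)) (Q n) = P (x-1) := min_eq_left (by rw [hQn]; exact hPle1 (x-1) (by omega))
    have e3 : min (P x) (Q (n-1)) = Q (n-1) :=
      min_eq_right (by rw [hQn1]; exact le_trans (le_of_lt hcond) (hPge x (by omega) hxn))
    have e4 : min (P (x-1)) (Q (n-1)) = Q (n-1) :=
      min_eq_right (by rw [hQn1]; exact le_trans (le_of_lt hcond) (hPge (x-1) (by omega) (by omega)))
    rw [e1, e2, e3, e4]
    have := split p x (by omega)
    simp only [hP] at *
    linarith
  · -- πs 0 n
    simp only
    have e1 : min (P 0) (Q n) = P 0 := min_eq_left (by rw [hQn]; exact hPle1 0 (by omega))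
    have e2 : min (P (0-1)) (Q n) = P (0-1) := by
      rw [show (0:ℤ)-1 = -1 by norm_num, hPneg]; exact min_eq_left (hQnonneg n le_rfl)
    have e3 : min (P 0) (Q (n-1)) = Q (n-1) :=
      min_eq_right (by rw [hQn1, hP0]; exact le_of_lt hcond)
    have e4 : min (P (0-1)) (Q (n-1)) = P (0-1) := by
      rw [show (0:ℤ)-1 = -1 by norm_num, hPneg]; exact min_eq_left (hQnonneg (n-1) (by omega))
    rw [e1, e2, e3, e4]
    rw [show (0:ℤ)-1 = -1 by norm_num, hPneg, hP0, hQn1]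
    ring
  · -- πs x x' = 0
    intro x x' hx hxn hx' hx'n
    simp only
    have e1 : min (P x) (Q x') = Q x' :=
      min_eq_right (le_trans (hQle x' (by omega)) (le_trans (le_of_lt hcond) (hPge x (by omega) hxn)))
    have e2 : min (P (x-1)) (Q x') = Q x' :=
      min_eq_right (le_trans (hQle x' (by omega)) (le_trans (le_of_lt hcond) (hPge (x-1) (by omega) (by omega))))
    have e3 : min (P x) (Q (x'-1)) = Q (x'-1) :=
      min_eq_right (le_trans (hQle (x'-1) (by omega)) (le_trans (le_of_lt hcond) (hPge x (by omega) hxn)))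
    have e4 : min (P (x-1)) (Q (x'-1)) = Q (x'-1) :=
      min_eq_right (le_trans (hQle (x'-1) (by omega)) (le_trans (le_of_lt hcond) (hPge (x-1) (by omega) (by omega))))
    rw [e1, e2, e3, e4]
    ring
end

section
/- Let p, q : {0,1,...,n} → ℝ≥0 be probability mass functions, and define the coupling π* via π*(x,x') = F(x,x') − F(x−1,x') − F(x,x'−1) + F(x−1,x'−1) with F(x,x') = min(∑_{k≤x} p(k), ∑_{k≤x'} q(k)) and the convention F(−1,·)=F(·,−1)=0. Then π* is a valid coupling of p and q: π*(x,x') ≥ 0 for all x, x', ∑_{x'} π*(x,x') = p(x) for all x, and ∑_{x} π*(x,x') = q(x') for all x'. -/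
/-!
With `P`, `Q` the cumulative mass functions, `π*` is the rectangle increment of
`F x x' = min (P x) (Q x')`. It is nonnegative because `min` is supermodular and `P`, `Q` are
monotone. A row sum telescopes to `F x n - F (x - 1) n - F x (-1) + F (x - 1) (-1)`, and since
`0 = Q (-1) ≤ P ≤ P n = Q n` this is `P x - P (x - 1) = p x`; columns follow by symmetry.
-/

open Finset

theorem min_add_min_le_min_add_min {α : Type*} [AddCommMonoid α] [LinearOrder α]
    [IsOrderedAddMonoid α] {a a' b b' : α} (ha : a' ≤ a) (hb : b' ≤ b) :
    min a' b + min a b' ≤ min a b + min a' b' := by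
  rcases le_total a' b' with h | h
  · rw [min_eq_left (h.trans hb), min_eq_left h, add_comm (min a b)]
    gcongr
  · rw [min_eq_right (h.trans ha), min_eq_right h]
    gcongr

theorem Finset.sum_Icc_sub_one_right_add {α M : Type*} [LinearOrder α] [One α] [Sub α]
    [PredSubOrder α] [NoMinOrder α] [LocallyFiniteOrder α] [AddCommMonoid M] (f : α → M)
    {a b : α} (h : a ≤ b) : ∑ k ∈ Icc a (b - 1), f k + f b = ∑ k ∈ Icc a b, f k := by
  rw [← insert_Icc_sub_one_right_eq_Icc h, sum_insert (by simp), add_comm]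

section Telescoping

variable {M : Type*} [AddCommGroup M]

theorem Int.sum_Icc_sub_sub_one (g : ℤ → M) {a n : ℤ} (hn : a - 1 ≤ n) :
    ∑ x ∈ Icc a n, (g x - g (x - 1)) = g n - g (a - 1) := by
  induction n, hn using Int.leInduction with
  | base => simp
  | succ m hm ih =>
    rw [← sum_Icc_sub_one_right_add _ (by omega), add_sub_cancel_right, ih]
    abel

theorem Int.sum_Icc_rectIncrement_right (F : ℤ → ℤ → M) (x : ℤ) {n : ℤ} (hn : -1 ≤ n) :
    ∑ y ∈ Icc 0 n, (F x y - F (x - 1) y - F x (y - 1) + F (x - 1) (y - 1)) =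
      F x n - F (x - 1) n - F x (-1) + F (x - 1) (-1) := by
  calc _ = ∑ y ∈ Icc 0 n, ((F x y - F (x - 1) y) - (F x (y - 1) - F (x - 1) (y - 1))) :=
        sum_congr rfl fun _ _ => by abel
    _ = _ := by
      rw [Int.sum_Icc_sub_sub_one (fun y => F x y - F (x - 1) y) hn, zero_sub]
      abel

end Telescoping

section Cumulative

variable {M : Type*} [AddCommMonoid M]

noncomputable def cmf (p : ℤ → M) (x : ℤ) : M :=
  ∑ k ∈ Icc 0 x, p k

theorem cmf_neg_one (p : ℤ → M) : cmf p (-1) = 0 := by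
  simp [cmf]

theorem cmf_sub_one_add (p : ℤ → M) {x : ℤ} (hx : 0 ≤ x) :
    cmf p (x - 1) + p x = cmf p x :=
  sum_Icc_sub_one_right_add p hx

variable [PartialOrder M] [IsOrderedAddMonoid M] {p : ℤ → M} {n x : ℤ}

theorem cmf_nonneg (hp : ∀ k ∈ Icc 0 n, 0 ≤ p k) (hx : x ≤ n) : 0 ≤ cmf p x :=
  sum_nonneg fun k hk => hp k (Icc_subset_Icc_right hx hk)

theorem cmf_le_cmf (hp : ∀ k ∈ Icc 0 n, 0 ≤ p k) (hx : x ≤ n) : cmf p x ≤ cmf p n :=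
  sum_le_sum_of_subset_of_nonneg (Icc_subset_Icc_right hx) fun k hk _ => hp k hk

theorem cmf_sub_one_le (hp : ∀ k ∈ Icc 0 n, 0 ≤ p k) (hx : x ∈ Icc 0 n) :
    cmf p (x - 1) ≤ cmf p x :=
  cmf_sub_one_add p (mem_Icc.1 hx).1 ▸ le_add_of_nonneg_right (hp x hx)

end Cumulative

theorem sum_Icc_min_cmf_rectIncrement_right {α : Type*} [AddCommGroup α] [LinearOrder α]
    [IsOrderedAddMonoid α] {p q : ℤ → α} {n x : ℤ} (hp : ∀ k ∈ Icc 0 n, 0 ≤ p k)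
    (hpq : cmf p n = cmf q n) (hx : x ∈ Icc 0 n) :
    ∑ y ∈ Icc 0 n, (min (cmf p x) (cmf q y) - min (cmf p (x - 1)) (cmf q y) -
      min (cmf p x) (cmf q (y - 1)) + min (cmf p (x - 1)) (cmf q (y - 1))) = p x := by
  obtain ⟨hx0, hxn⟩ := mem_Icc.1 hx
  refine (Int.sum_Icc_rectIncrement_right (fun a b => min (cmf p a) (cmf q b)) x
    (by omega)).trans ?_
  rw [cmf_neg_one, ← hpq, min_eq_left (cmf_le_cmf hp hxn),
    min_eq_left (cmf_le_cmf hp (by omega : x - 1 ≤ n)), min_eq_right (cmf_nonneg hp hxn),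
    min_eq_right (cmf_nonneg hp (by omega : x - 1 ≤ n)), ← cmf_sub_one_add p hx0]
  abel

theorem kantorovich_construction_is_coupling_general
    (n : ℤ) (p q : ℤ → ℝ)
    (hp : ∀ k ∈ Finset.Icc 0 n, 0 ≤ p k) (hp1 : ∑ k ∈ Finset.Icc 0 n, p k = 1)
    (hq : ∀ k ∈ Finset.Icc 0 n, 0 ≤ q k) (hq1 : ∑ k ∈ Finset.Icc 0 n, q k = 1)
    (F : ℤ → ℤ → ℝ)
    (hF : F = fun x x' => min (∑ k ∈ Finset.Icc 0 x, p k) (∑ k ∈ Finset.Icc 0 x', q k))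
    (πs : ℤ → ℤ → ℝ)
    (hπs : πs = fun x x' => F x x' - F (x - 1) x' - F x (x' - 1) + F (x - 1) (x' - 1)) :
    (∀ x ∈ Finset.Icc 0 n, ∀ x' ∈ Finset.Icc 0 n, 0 ≤ πs x x') ∧
    (∀ x ∈ Finset.Icc 0 n, ∑ x' ∈ Finset.Icc 0 n, πs x x' = p x) ∧
    (∀ x' ∈ Finset.Icc 0 n, ∑ x ∈ Finset.Icc 0 n, πs x x' = q x') := by
  obtain rfl : F = fun x x' => min (cmf p x) (cmf q x') := hF
  subst hπs
  have hpq : cmf p n = cmf q n := hp1.trans hq1.symm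
  refine ⟨fun x hx x' hx' => ?_, fun x hx => sum_Icc_min_cmf_rectIncrement_right hp hpq hx,
    fun x' hx' => ?_⟩
  · linarith [min_add_min_le_min_add_min (cmf_sub_one_le hp hx) (cmf_sub_one_le hq hx')]
  · rw [← sum_Icc_min_cmf_rectIncrement_right hq hpq.symm hx']
    refine sum_congr rfl fun x _ => ?_
    simp only [min_comm (cmf q _)]
    abel

theorem kantorovich_construction_is_coupling
    (n : ℤ) (hn : 0 ≤ n) (p q : ℤ → ℝ)
    (hp : ∀ k ∈ Finset.Icc 0 n, 0 ≤ p k) (hp1 : ∑ k ∈ Finset.Icc 0 n, p k = 1)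
    (hq : ∀ k ∈ Finset.Icc 0 n, 0 ≤ q k) (hq1 : ∑ k ∈ Finset.Icc 0 n, q k = 1)
    (F : ℤ → ℤ → ℝ)
    (hF : F = fun x x' => min (∑ k ∈ Finset.Icc 0 x, p k) (∑ k ∈ Finset.Icc 0 x', q k))
    (πs : ℤ → ℤ → ℝ)
    (hπs : πs = fun x x' => F x x' - F (x - 1) x' - F x (x' - 1) + F (x - 1) (x' - 1)) :
    (∀ x ∈ Finset.Icc 0 n, ∀ x' ∈ Finset.Icc 0 n, 0 ≤ πs x x') ∧
    (∀ x ∈ Finset.Icc 0 n, ∑ x' ∈ Finset.Icc 0 n, πs x x' = p x) ∧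
    (∀ x' ∈ Finset.Icc 0 n, ∑ x ∈ Finset.Icc 0 n, πs x x' = q x') :=
  kantorovich_construction_is_coupling_general n p q hp hp1 hq hq1 F hF πs hπs
end

section
/- Let ε > 0 and consider two probability mass functions on {0,1}: p = (1/2 + δ, 1/2 − δ) and q = (1/2, 1/2) with 0 < δ < 1/2. The Kantorovich optimal transport plan is π*(0,0) = 1/2, π*(1,1) = 1/2 − δ, π*(0,1) = δ, π*(1,0) = 0. Then the unique θ̂ > 0 solving ∑_x (exp(|x − 1|/θ̂) − exp(ε)) π*(x, 1) = 0 is θ̂ = 1/ln(exp(ε) + (exp(ε) − 1)·(1/2 − δ)/δ), and θ̂ < 1/ε. -/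
/-! Only `x = 0` sends mass to `1` at a positive cost, so the balance equation is affine in
`exp (1 / θ)` and pins it to `A = exp ε + (exp ε - 1) (1/2 - δ) / δ`. Since `A > exp ε`,
`1 / θ̂ = log A > ε`. -/

lemma exp_one_div_eq_iff {θ A : ℝ} (hA : 0 < A) :
    Real.exp (1 / θ) = A ↔ θ = 1 / Real.log A := by
  rw [← Real.exp_log hA, Real.exp_eq_exp, Real.log_exp, one_div, one_div, inv_eq_iff_eq_inv]

lemma sub_mul_add_one_sub_mul_eq_zero_iff {t c a b : ℝ} (ha : a ≠ 0) :
    (t - c) * a + (1 - c) * b = 0 ↔ t = c + (c - 1) * b / a := by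
  constructor
  · intro h
    field_simp
    linear_combination h
  · rintro rfl
    field_simp
    ring

lemma sum_range_two_exp_abs_sub_one (θ c : ℝ) (p : ℕ → ℕ → ℝ) :
    ∑ x ∈ Finset.range 2, (Real.exp (|(x : ℝ) - 1| / θ) - c) * p x 1
      = (Real.exp (1 / θ) - c) * p 0 1 + (1 - c) * p 1 1 := by
  simp [Finset.sum_range_succ]

lemma one_div_log_exp_add_lt_one_div {ε a b : ℝ} (hε : 0 < ε) (ha : 0 < a) (hb : 0 < b) :
    1 / Real.log (Real.exp ε + (Real.exp ε - 1) * b / a) < 1 / ε := by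
  have hexp : 1 < Real.exp ε := Real.one_lt_exp_iff.mpr hε
  have hgap : 0 < (Real.exp ε - 1) * b / a := by positivity
  apply one_div_lt_one_div_of_lt hε
  rw [Real.lt_log_iff_exp_lt (by positivity)]
  linarith

theorem binary_example_closed_form
    (ε δ : ℝ) (hε : 0 < ε) (hδ : 0 < δ) (hδ2 : δ < 1 / 2)
    (π : ℕ → ℕ → ℝ)
    (hπ : π = fun x y =>
      if x = 0 ∧ y = 0 then 1 / 2
      else if x = 1 ∧ y = 1 then 1 / 2 - δ
      else if x = 0 ∧ y = 1 then δ
      else 0)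
    (θhat : ℝ)
    (hθhat : θhat = 1 / Real.log (Real.exp ε + (Real.exp ε - 1) * (1 / 2 - δ) / δ)) :
    (∀ θ : ℝ, 0 < θ →
      ((∑ x ∈ Finset.range 2,
          (Real.exp (|(x : ℝ) - 1| / θ) - Real.exp ε) * π x 1) = 0 ↔ θ = θhat)) ∧
    θhat < 1 / ε := by
  have hmass11 : 0 < 1 / 2 - δ := sub_pos.mpr hδ2
  have hexp : 1 < Real.exp ε := Real.one_lt_exp_iff.mpr hε
  subst hθhat
  refine ⟨fun θ _ => ?_, one_div_log_exp_add_lt_one_div hε hδ hmass11⟩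
  have hπ01 : π 0 1 = δ := by simp [hπ]
  have hπ11 : π 1 1 = 1 / 2 - δ := by simp [hπ]
  rw [sum_range_two_exp_abs_sub_one, hπ01, hπ11,
    sub_mul_add_one_sub_mul_eq_zero_iff hδ.ne', exp_one_div_eq_iff (by positivity)]
end
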